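/- Let n ≥ 2, let f be the symmetric quartic form on ℝⁿ determined by real coefficients a, b, c, d, e, and let r, s be positive integers with r + s ≤ n. Define g : [1,∞) → ℝ by g(t) = f( (t/(rt+s))·1_r, (1/(rt+s))·1_s, 0_{n−r−s} ). Then g(1) = f(1_{r+s}, 0_{n−r−s}) / (r+s)⁴, and for every t ≥ 1 the derivative satisfies g′(t) = [rs(t−1)/(rt+s)⁵] · [4a(t²+t+1) + 3b(t+1)(rt+s) + 4c(rt²+s) + 2d(rt+s)²]. -/

import Mathlib

open Finset

/-- The `k`-th power sum of `x ∈ ℝⁿ`. -/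
noncomputable def powSum (n : ℕ) (k : ℕ) (x : Fin n → ℝ) : ℝ := ∑ i, x i ^ k

/-- The symmetric quartic form with coefficients `a, b, c, d, e`. -/
noncomputable def quarticF (n : ℕ) (a b c d e : ℝ) (x : Fin n → ℝ) : ℝ :=
  a * powSum n 4 x + b * powSum n 3 x * powSum n 1 x + c * (powSum n 2 x) ^ 2
    + d * powSum n 2 x * (powSum n 1 x) ^ 2 + e * (powSum n 1 x) ^ 4

/-- The point `(u·1_r, v·1_s, 0_{n−r−s}) ∈ ℝⁿ`. -/
noncomputable def blockPt (n r s : ℕ) (u v : ℝ) : Fin n → ℝ :=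
  fun i => if (i : ℕ) < r then u else if (i : ℕ) < r + s then v else 0

/-- The normalized function `g(t) = f((t/(rt+s))·1_r, (1/(rt+s))·1_s, 0_{n−r−s})`. -/
noncomputable def gfun (n : ℕ) (a b c d e : ℝ) (r s : ℕ) (t : ℝ) : ℝ :=
  quarticF n a b c d e
    (blockPt n r s (t / ((r : ℝ) * t + (s : ℝ))) (1 / ((r : ℝ) * t + (s : ℝ))))

lemma powSum_blockPt (n k r s : ℕ) (hk : 1 ≤ k) (hrs : r + s ≤ n) (u v : ℝ) :
    powSum n k (blockPt n r s u v) = r * u ^ k + s * v ^ k := by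
  unfold powSum blockPt
  rw [Fin.sum_univ_eq_sum_range (fun j => (if j < r then u else if j < r + s then v else 0) ^ k)]
  rw [Finset.range_eq_Ico, ← Finset.sum_Ico_consecutive _ (Nat.zero_le (r + s)) hrs,
      ← Finset.sum_Ico_consecutive _ (Nat.zero_le r) (Nat.le_add_right r s)]
  have e1 : ∀ j ∈ Finset.Ico 0 r,
      (if j < r then u else if j < r + s then v else 0) ^ k = u ^ k := by
    intro j hj
    rw [Finset.mem_Ico] at hj
    rw [if_pos hj.2]
  have e2 : ∀ j ∈ Finset.Ico r (r + s),
      (if j < r then u else if j < r + s then v else 0) ^ k = v ^ k := by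
    intro j hj
    rw [Finset.mem_Ico] at hj
    rw [if_neg (by omega), if_pos hj.2]
  have e3 : ∀ j ∈ Finset.Ico (r + s) n,
      (if j < r then u else if j < r + s then v else 0) ^ k = 0 := by
    intro j hj
    rw [Finset.mem_Ico] at hj
    rw [if_neg (by omega), if_neg (by omega)]
    exact zero_pow (by omega)
  rw [Finset.sum_congr rfl e1, Finset.sum_congr rfl e2, Finset.sum_congr rfl e3,
      Finset.sum_const, Finset.sum_const, Finset.sum_const, Nat.card_Ico, Nat.card_Ico,
      Nat.sub_zero, Nat.add_sub_cancel_left, nsmul_eq_mul, nsmul_eq_mul, smul_zero, add_zero]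

lemma gfun_eq (n : ℕ) (a b c d e : ℝ) (r s : ℕ) (hrs : r + s ≤ n) (t : ℝ)
    (hD : (r : ℝ) * t + (s : ℝ) ≠ 0) :
    gfun n a b c d e r s t =
      (a * ((r : ℝ) * t ^ 4 + s) + b * ((r : ℝ) * t ^ 3 + s) * ((r : ℝ) * t + s)
        + c * ((r : ℝ) * t ^ 2 + s) ^ 2 + d * ((r : ℝ) * t ^ 2 + s) * ((r : ℝ) * t + s) ^ 2
        + e * ((r : ℝ) * t + s) ^ 4) / ((r : ℝ) * t + s) ^ 4 := by
  unfold gfun quarticF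
  rw [powSum_blockPt n 4 r s (by norm_num) hrs, powSum_blockPt n 3 r s (by norm_num) hrs,
      powSum_blockPt n 2 r s (by norm_num) hrs, powSum_blockPt n 1 r s (by norm_num) hrs]
  field_simp

/-- Value of `g` at `1` and its derivative on `[1, ∞)`. -/
theorem gfun_value_and_deriv (n : ℕ) (hn : 2 ≤ n) (a b c d e : ℝ) (r s : ℕ)
    (hr : 1 ≤ r) (hs : 1 ≤ s) (hrs : r + s ≤ n) :
    gfun n a b c d e r s 1
      = quarticF n a b c d e (blockPt n (r + s) 0 1 0) / ((r : ℝ) + (s : ℝ)) ^ 4 ∧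
    ∀ t : ℝ, 1 ≤ t →
      deriv (gfun n a b c d e r s) t
        = (r : ℝ) * (s : ℝ) * (t - 1) / ((r : ℝ) * t + (s : ℝ)) ^ 5
          * (4 * a * (t ^ 2 + t + 1) + 3 * b * (t + 1) * ((r : ℝ) * t + (s : ℝ))
            + 4 * c * ((r : ℝ) * t ^ 2 + (s : ℝ))
            + 2 * d * ((r : ℝ) * t + (s : ℝ)) ^ 2) := by
  have hr1 : (1 : ℝ) ≤ (r : ℝ) := by exact_mod_cast hr
  have hs1 : (1 : ℝ) ≤ (s : ℝ) := by exact_mod_cast hs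
  have hDpos : ∀ t : ℝ, 1 ≤ t → 0 < (r : ℝ) * t + (s : ℝ) := by
    intro t ht
    nlinarith
  constructor
  · have hD1 : (r : ℝ) * 1 + (s : ℝ) ≠ 0 := (hDpos 1 le_rfl).ne'
    rw [gfun_eq n a b c d e r s hrs 1 hD1]
    unfold quarticF
    rw [powSum_blockPt n 4 (r + s) 0 (by norm_num) (by omega),
        powSum_blockPt n 3 (r + s) 0 (by norm_num) (by omega),
        powSum_blockPt n 2 (r + s) 0 (by norm_num) (by omega),
        powSum_blockPt n 1 (r + s) 0 (by norm_num) (by omega)]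
    push_cast
    have : (r : ℝ) + s ≠ 0 := by rw [mul_one] at hD1; exact hD1
    field_simp
    ring
  · intro t ht
    have hD : (r : ℝ) * t + (s : ℝ) ≠ 0 := (hDpos t ht).ne'
    set F : ℝ → ℝ := fun t =>
      (a * ((r : ℝ) * t ^ 4 + s) + b * ((r : ℝ) * t ^ 3 + s) * ((r : ℝ) * t + s)
        + c * ((r : ℝ) * t ^ 2 + s) ^ 2 + d * ((r : ℝ) * t ^ 2 + s) * ((r : ℝ) * t + s) ^ 2
        + e * ((r : ℝ) * t + s) ^ 4) / ((r : ℝ) * t + s) ^ 4 with hF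
    -- derivative building blocks
    have hL : HasDerivAt (fun x : ℝ => (r : ℝ) * x + s) ((r : ℝ) * 1) t :=
      ((hasDerivAt_id t).const_mul (r : ℝ)).add_const (s : ℝ)
    have hP : ∀ k : ℕ, HasDerivAt (fun x : ℝ => (r : ℝ) * x ^ k + s)
        ((r : ℝ) * (k * t ^ (k - 1))) t :=
      fun k => ((hasDerivAt_pow k t).const_mul (r : ℝ)).add_const (s : ℝ)
    have hNum : HasDerivAt (fun x : ℝ =>
        a * ((r : ℝ) * x ^ 4 + s) + b * ((r : ℝ) * x ^ 3 + s) * ((r : ℝ) * x + s)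
        + c * ((r : ℝ) * x ^ 2 + s) ^ 2 + d * ((r : ℝ) * x ^ 2 + s) * ((r : ℝ) * x + s) ^ 2
        + e * ((r : ℝ) * x + s) ^ 4)
        (a * ((r : ℝ) * (4 * t ^ 3))
          + (b * (((r : ℝ) * (3 * t ^ 2)) * ((r : ℝ) * t + s)
              + ((r : ℝ) * t ^ 3 + s) * ((r : ℝ) * 1)))
          + c * (2 * ((r : ℝ) * t ^ 2 + s) ^ 1 * ((r : ℝ) * (2 * t ^ 1)))
          + d * (((r : ℝ) * (2 * t ^ 1)) * ((r : ℝ) * t + s) ^ 2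
              + ((r : ℝ) * t ^ 2 + s) * (2 * ((r : ℝ) * t + s) ^ 1 * ((r : ℝ) * 1)))
          + e * (4 * ((r : ℝ) * t + s) ^ 3 * ((r : ℝ) * 1))) t := by
      have h1 := (hP 4).const_mul a
      have h2 := ((hP 3).mul hL).const_mul b
      have h3 := (((hP 2).pow 2)).const_mul c
      have h4 := ((hP 2).mul (hL.pow 2)).const_mul d
      have h5 := ((hL.pow 4)).const_mul e
      have := (((h1.add h2).add h3).add h4).add h5
      convert this using 2 <;> first | rfl | (simp only [Pi.add_apply, Pi.mul_apply, Pi.pow_apply]; ring1) | (push_cast; ring)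
    have hDen : HasDerivAt (fun x : ℝ => ((r : ℝ) * x + s) ^ 4)
        (4 * ((r : ℝ) * t + s) ^ 3 * ((r : ℝ) * 1)) t := hL.pow 4
    have hFderiv : HasDerivAt F _ t := hNum.div hDen (pow_ne_zero 4 hD)
    have heq : gfun n a b c d e r s =ᶠ[nhds t] F := by
      have hopen : IsOpen {x : ℝ | 0 < (r : ℝ) * x + s} :=
        isOpen_lt continuous_const (by continuity)
      filter_upwards [hopen.mem_nhds (hDpos t ht)] with x hx
      exact gfun_eq n a b c d e r s hrs x hx.ne'
    have hG : HasDerivAt (gfun n a b c d e r s) _ t := hFderiv.congr_of_eventuallyEq heq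
    rw [hG.deriv]
    field_simp
    ring
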